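/- Let K ⊂ ℝⁿ be open, bounded, convex containing the origin, and let K* = {x : φ_K(x) < 1} be its dual body. Then the union over all x ∈ ∂K of the subdifferentials ∂φ*_K(x) equals the boundary of K*: ⋃_{x ∈ ∂K} ∂φ*_K(x) = ∂K*. -/

import Mathlib

open scoped RealInnerProductSpace
open Metric Set

/-- The support function (surface tension) of `K`: `φ_K(x) = sup {x·y : y ∈ K}`. -/
noncomputable def suppFn {n : ℕ} (K : Set (EuclideanSpace ℝ (Fin n)))
    (x : EuclideanSpace ℝ (Fin n)) : ℝ :=
  sSup ((fun y => ⟪x, y⟫) '' K)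

/-- The gauge function `φ*_K(x) = sup {x·y : φ_K(y) < 1}`. -/
noncomputable def gaugeFn {n : ℕ} (K : Set (EuclideanSpace ℝ (Fin n)))
    (x : EuclideanSpace ℝ (Fin n)) : ℝ :=
  sSup ((fun y => ⟪x, y⟫) '' {y | suppFn K y < 1})

/-- The subdifferential of a convex function `φ` at `x₀`. -/
def subdiff {n : ℕ} (φ : EuclideanSpace ℝ (Fin n) → ℝ)
    (x₀ : EuclideanSpace ℝ (Fin n)) : Set (EuclideanSpace ℝ (Fin n)) :=
  {y₀ | ∀ z, φ x₀ + ⟪y₀, z - x₀⟫ ≤ φ z}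

/-- The positive cone `C*_K(x₀)` generated by the subdifferential `∂φ*_K(x₀)`. -/
def coneStar {n : ℕ} (K : Set (EuclideanSpace ℝ (Fin n)))
    (x₀ : EuclideanSpace ℝ (Fin n)) : Set (EuclideanSpace ℝ (Fin n)) :=
  {w | ∃ y ∈ subdiff (gaugeFn K) x₀, ∃ l : ℝ, 0 ≤ l ∧ w = l • y}

/-!
Hahn–Banach separates every point outside `closure K` by a functional which, rescaled, lies in
`K*`; hence `φ*_K` is the Minkowski functional `gauge K` and `∂K = {φ*_K = 1}`. Since `φ*_K` is
positively homogeneous, `y ∈ ∂φ*_K(x)` means `⟪y, x⟫ = φ*_K(x)` and `⟪y, ·⟫ ≤ φ*_K`. For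
`x ∈ ∂K` this squeezes `φ_K(y)` to `1`, i.e. `y ∈ ∂K*`. Conversely, if `φ_K(y) = 1`, a maximiser
`x` of `⟪y, ·⟫` on `closure K` satisfies `1 = ⟪y, x⟫ ≤ φ*_K(x) ≤ 1`, so `x ∈ ∂K` and
`y ∈ ∂φ*_K(x)`.
-/

open Bornology Filter Topology
open scoped Pointwise

section SupportFunction

variable {n : ℕ} {S : Set (EuclideanSpace ℝ (Fin n))}

lemma bddAbove_inner_image (hS : IsBounded S) (y : EuclideanSpace ℝ (Fin n)) :
    BddAbove ((fun w => ⟪y, w⟫) '' S) :=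
  ((innerSL ℝ y).lipschitz.isBounded_image hS).bddAbove

lemma inner_le_suppFn (hS : IsBounded S) {w : EuclideanSpace ℝ (Fin n)} (hw : w ∈ S)
    (y : EuclideanSpace ℝ (Fin n)) : ⟪y, w⟫ ≤ suppFn S y :=
  le_csSup (bddAbove_inner_image hS y) (mem_image_of_mem _ hw)

lemma suppFn_le_iff (hS : IsBounded S) (hne : S.Nonempty) {y : EuclideanSpace ℝ (Fin n)}
    {c : ℝ} : suppFn S y ≤ c ↔ ∀ w ∈ S, ⟪y, w⟫ ≤ c := by
  rw [suppFn, csSup_le_iff (bddAbove_inner_image hS y) (hne.image _), forall_mem_image]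

lemma inner_le_suppFn_of_mem_closure (hS : IsBounded S) {w : EuclideanSpace ℝ (Fin n)}
    (hw : w ∈ closure S) (y : EuclideanSpace ℝ (Fin n)) : ⟪y, w⟫ ≤ suppFn S y :=
  closure_minimal (t := {w | ⟪y, w⟫ ≤ suppFn S y}) (fun _ hw' => inner_le_suppFn hS hw' y)
    (isClosed_le (by fun_prop) continuous_const) hw

lemma suppFn_smul {t : ℝ} (ht : 0 ≤ t) (y : EuclideanSpace ℝ (Fin n)) :
    suppFn S (t • y) = t * suppFn S y := by
  have : (fun w => ⟪t • y, w⟫) '' S = t • (fun w => ⟪y, w⟫) '' S := by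
    rw [← image_smul, image_image]
    simp only [real_inner_smul_left, smul_eq_mul]
  rw [suppFn, this, Real.sSup_smul_of_nonneg ht, smul_eq_mul, suppFn]

lemma continuous_suppFn (hS : IsBounded S) (hne : S.Nonempty) : Continuous (suppFn S) := by
  obtain ⟨R, hR⟩ := hS.subset_closedBall 0
  refine (LipschitzWith.of_le_add_mul' R fun a b =>
    (suppFn_le_iff hS hne).2 fun w hw => ?_).continuous
  have hwR : ‖w‖ ≤ R := mem_closedBall_zero_iff.1 (hR hw)
  calc ⟪a, w⟫ = ⟪b, w⟫ + ⟪a - b, w⟫ := by rw [inner_sub_left]; ring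
    _ ≤ suppFn S b + ‖a - b‖ * ‖w‖ := add_le_add (inner_le_suppFn hS hw b) (real_inner_le_norm _ _)
    _ ≤ suppFn S b + R * dist a b := by
      rw [dist_eq_norm, mul_comm R]; gcongr

lemma frontier_setOf_suppFn_lt_one (hS : IsBounded S) (hne : S.Nonempty) :
    frontier {y | suppFn S y < 1} = {y | suppFn S y = 1} := by
  have hcont := continuous_suppFn hS hne
  refine (frontier_lt_subset_eq hcont continuous_const).antisymm fun y (hy : suppFn S y = 1) => ?_
  rw [(isOpen_lt hcont continuous_const).frontier_eq]
  refine ⟨?_, by simp [hy]⟩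
  have hlim : Tendsto (fun t : ℝ => t • y) (𝓝[<] 1) (𝓝 y) :=
    ((continuous_id.smul continuous_const).tendsto' 1 y (one_smul ℝ y)).mono_left
      nhdsWithin_le_nhds
  refine mem_closure_of_tendsto hlim ?_
  filter_upwards [Ioo_mem_nhdsLT zero_lt_one] with t ht
  simpa [suppFn_smul ht.1.le, hy] using ht.2

lemma exists_mem_closure_inner_eq_suppFn (hS : IsBounded S) (hne : S.Nonempty)
    (y : EuclideanSpace ℝ (Fin n)) : ∃ x ∈ closure S, ⟪y, x⟫ = suppFn S y := by
  obtain ⟨x, hx, hmax⟩ := hS.isCompact_closure.exists_isMaxOn hne.closure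
    (f := fun w => ⟪y, w⟫) (by fun_prop)
  refine ⟨x, hx, le_antisymm (inner_le_suppFn_of_mem_closure hS hx y) ?_⟩
  exact (suppFn_le_iff hS hne).2 fun w hw => hmax (subset_closure hw)

lemma suppFn_zero : suppFn S 0 = 0 := by
  simpa using suppFn_smul (S := S) le_rfl 0

lemma suppFn_nonneg (hS : IsBounded S) (h0 : (0 : EuclideanSpace ℝ (Fin n)) ∈ S)
    (y : EuclideanSpace ℝ (Fin n)) : 0 ≤ suppFn S y := by
  simpa using inner_le_suppFn hS h0 y

end SupportFunction

lemma le_of_forall_le_one_imp_le_one {E : Type*} [AddCommGroup E] [Module ℝ E] {f g : E → ℝ}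
    (hf : ∀ t : ℝ, 0 ≤ t → ∀ x, f (t • x) = t * f x)
    (hg : ∀ t : ℝ, 0 ≤ t → ∀ x, g (t • x) = t * g x) (hg0 : ∀ x, 0 ≤ g x)
    (h : ∀ x, g x ≤ 1 → f x ≤ 1) (x : E) : f x ≤ g x := by
  refine le_of_forall_gt_imp_ge_of_dense fun t ht => ?_
  have ht0 : 0 < t := (hg0 x).trans_lt ht
  have hle := h (t⁻¹ • x) (by rw [hg _ (inv_nonneg.2 ht0.le), inv_mul_le_one₀ ht0]; exact ht.le)
  rwa [hf _ (inv_nonneg.2 ht0.le), inv_mul_le_one₀ ht0] at hle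

lemma mem_subdiff_iff_of_smul {n : ℕ} {φ : EuclideanSpace ℝ (Fin n) → ℝ}
    (hφ : ∀ t : ℝ, 0 ≤ t → ∀ x, φ (t • x) = t * φ x) {x y : EuclideanSpace ℝ (Fin n)} :
    y ∈ subdiff φ x ↔ ⟪y, x⟫ = φ x ∧ ∀ z, ⟪y, z⟫ ≤ φ z := by
  have hφ0 : φ 0 = 0 := by simpa using hφ 0 le_rfl 0
  constructor
  · intro h
    have h0 := h 0
    have h2 := h ((2 : ℝ) • x)
    rw [hφ0, zero_sub, inner_neg_right] at h0
    rw [hφ 2 zero_le_two, two_smul, add_sub_cancel_right] at h2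
    have hyx : ⟪y, x⟫ = φ x := by linarith
    refine ⟨hyx, fun z => ?_⟩
    have hz := h z
    rw [inner_sub_right, hyx] at hz
    linarith
  · rintro ⟨hyx, hy⟩ z
    rw [inner_sub_right, hyx]
    linarith [hy z]

section DualBody

variable {n : ℕ} {K : Set (EuclideanSpace ℝ (Fin n))}

lemma isBounded_setOf_suppFn_lt_one (hKb : IsBounded K) (hK0 : K ∈ 𝓝 0) :
    IsBounded {y | suppFn K y < 1} := by
  obtain ⟨r, hr, hball⟩ := Metric.mem_nhds_iff.1 hK0
  refine (isBounded_closedBall (x := 0) (r := 2 / r)).subset fun y (hy : suppFn K y < 1) => ?_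
  rcases eq_or_ne y 0 with rfl | hy0
  · simp only [mem_closedBall, dist_self]
    positivity
  have hyn : 0 < ‖y‖ := norm_pos_iff.2 hy0
  have hw : (r / 2 / ‖y‖) • y ∈ K := hball <| by
    rw [mem_ball_zero_iff, norm_smul, Real.norm_of_nonneg (by positivity),
      div_mul_cancel₀ _ hyn.ne']
    linarith
  have hle := (inner_le_suppFn hKb hw y).trans_lt hy
  rw [real_inner_smul_right, real_inner_self_eq_norm_sq] at hle
  rw [mem_closedBall_zero_iff, le_div_iff₀ hr]
  field_simp at hle
  nlinarith

lemma gaugeFn_smul {t : ℝ} (ht : 0 ≤ t) (x : EuclideanSpace ℝ (Fin n)) :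
    gaugeFn K (t • x) = t * gaugeFn K x :=
  suppFn_smul ht x

lemma gaugeFn_le_one_of_mem_closure (hKb : IsBounded K) {x : EuclideanSpace ℝ (Fin n)}
    (hx : x ∈ closure K) : gaugeFn K x ≤ 1 := by
  refine Real.sSup_le (forall_mem_image.2 fun y (hy : suppFn K y < 1) => ?_) zero_le_one
  rw [real_inner_comm]
  exact (inner_le_suppFn_of_mem_closure hKb hx y).trans hy.le

lemma one_lt_gaugeFn_of_notMem_closure (hKb : IsBounded K) (hKc : Convex ℝ K)
    (hK0 : K ∈ 𝓝 0) {x : EuclideanSpace ℝ (Fin n)} (hx : x ∉ closure K) :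
    1 < gaugeFn K x := by
  obtain ⟨f, u, hfu, hux⟩ := geometric_hahn_banach_closed_point hKc.closure isClosed_closure hx
  set y := (InnerProductSpace.toDual ℝ (EuclideanSpace ℝ (Fin n))).symm f
  have hy : ∀ w, ⟪y, w⟫ = f w := fun w => InnerProductSpace.toDual_symm_apply
  have hu : 0 < u := by simpa using hfu 0 (subset_closure (mem_of_mem_nhds hK0))
  obtain ⟨c, huc, hcx⟩ := exists_between hux
  have hc : 0 < c := hu.trans huc
  have hyK : suppFn K y ≤ u := (suppFn_le_iff hKb ⟨0, mem_of_mem_nhds hK0⟩).2 fun w hw =>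
    (hy w).trans_le (hfu w (subset_closure hw)).le
  have hmem : suppFn K (c⁻¹ • y) < 1 := by
    rw [suppFn_smul (inv_nonneg.2 hc.le), inv_mul_lt_one₀ hc]
    linarith
  calc 1 < c⁻¹ * f x := by rw [lt_inv_mul_iff₀ hc, mul_one]; linarith
    _ = ⟪x, c⁻¹ • y⟫ := by rw [real_inner_smul_right, real_inner_comm, hy]
    _ ≤ gaugeFn K x := inner_le_suppFn (isBounded_setOf_suppFn_lt_one hKb hK0) hmem x

lemma gaugeFn_le_one_iff_mem_closure (hKb : IsBounded K) (hKc : Convex ℝ K) (hK0 : K ∈ 𝓝 0)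
    {x : EuclideanSpace ℝ (Fin n)} : gaugeFn K x ≤ 1 ↔ x ∈ closure K :=
  ⟨fun h => by_contra fun hx => (one_lt_gaugeFn_of_notMem_closure hKb hKc hK0 hx).not_ge h,
    gaugeFn_le_one_of_mem_closure hKb⟩

lemma gaugeFn_eq_gauge (hKb : IsBounded K) (hKc : Convex ℝ K) (hK0 : K ∈ 𝓝 0) :
    gaugeFn K = gauge K := by
  have hgauge_smul : ∀ t : ℝ, 0 ≤ t → ∀ x, gauge K (t • x) = t * gauge K x :=
    fun t ht x => by rw [gauge_smul_of_nonneg ht, smul_eq_mul]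
  have hgaugeFn_nonneg : ∀ x, 0 ≤ gaugeFn K x :=
    suppFn_nonneg (isBounded_setOf_suppFn_lt_one hKb hK0) (by simp [suppFn_zero])
  funext x
  exact le_antisymm
    (le_of_forall_le_one_imp_le_one (fun _ => gaugeFn_smul) hgauge_smul gauge_nonneg
      (fun _ h => (gaugeFn_le_one_iff_mem_closure hKb hKc hK0).2
        ((gauge_le_one_iff_mem_closure hKc hK0).1 h)) x)
    (le_of_forall_le_one_imp_le_one hgauge_smul (fun _ => gaugeFn_smul) hgaugeFn_nonneg
      (fun _ h => (gauge_le_one_iff_mem_closure hKc hK0).2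
        ((gaugeFn_le_one_iff_mem_closure hKb hKc hK0).1 h)) x)

lemma mem_frontier_iff_gaugeFn_eq_one (hKb : IsBounded K) (hKc : Convex ℝ K) (hK0 : K ∈ 𝓝 0)
    {x : EuclideanSpace ℝ (Fin n)} : x ∈ frontier K ↔ gaugeFn K x = 1 := by
  rw [gaugeFn_eq_gauge hKb hKc hK0, gauge_eq_one_iff_mem_frontier hKc hK0]

lemma inner_le_gaugeFn_of_mem_closure (hKb : IsBounded K) (hK0 : K ∈ 𝓝 0)
    {y : EuclideanSpace ℝ (Fin n)} (hy : y ∈ closure {y | suppFn K y < 1})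
    (z : EuclideanSpace ℝ (Fin n)) : ⟪y, z⟫ ≤ gaugeFn K z := by
  rw [real_inner_comm]
  exact inner_le_suppFn_of_mem_closure (isBounded_setOf_suppFn_lt_one hKb hK0) hy z

end DualBody

theorem iUnion_subdiff_gauge_eq_frontier_dual_general
    {n : ℕ} (K : Set (EuclideanSpace ℝ (Fin n)))
    (hKo : IsOpen K) (hKb : Bornology.IsBounded K) (hKc : Convex ℝ K)
    (h0K : (0 : EuclideanSpace ℝ (Fin n)) ∈ K) :
    (⋃ x ∈ frontier K, subdiff (gaugeFn K) x) = frontier {y | suppFn K y < 1} := by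
  have hK0 : K ∈ 𝓝 0 := hKo.mem_nhds h0K
  have hne : K.Nonempty := ⟨0, h0K⟩
  have hfr := frontier_setOf_suppFn_lt_one hKb hne
  ext y
  simp only [mem_iUnion, exists_prop, mem_subdiff_iff_of_smul fun _ => gaugeFn_smul,
    hfr, mem_ofPred_eq]
  constructor
  · rintro ⟨x, hx, hyx, hy⟩
    rw [(mem_frontier_iff_gaugeFn_eq_one hKb hKc hK0).1 hx] at hyx
    refine le_antisymm ((suppFn_le_iff hKb hne).2 fun w hw =>
      (hy w).trans (gaugeFn_le_one_of_mem_closure hKb (subset_closure hw))) ?_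
    exact hyx ▸ inner_le_suppFn_of_mem_closure hKb (frontier_subset_closure hx) y
  · intro hy
    obtain ⟨x, hx, hyx⟩ := exists_mem_closure_inner_eq_suppFn hKb hne y
    have hy' : ∀ z, ⟪y, z⟫ ≤ gaugeFn K z :=
      inner_le_gaugeFn_of_mem_closure hKb hK0 (frontier_subset_closure (hfr ▸ hy))
    have hgx : gaugeFn K x = 1 :=
      le_antisymm (gaugeFn_le_one_of_mem_closure hKb hx) (hy ▸ hyx ▸ hy' x)
    exact ⟨x, (mem_frontier_iff_gaugeFn_eq_one hKb hKc hK0).2 hgx,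
      hyx.trans (hy.trans hgx.symm), hy'⟩

/-- The union over `x ∈ ∂K` of the subdifferentials `∂φ*_K(x)` equals the boundary
of the dual body `K* = {y : φ_K(y) < 1}`. -/
theorem iUnion_subdiff_gauge_eq_frontier_dual
    {n : ℕ} (hn : 0 < n) (K : Set (EuclideanSpace ℝ (Fin n)))
    (hKo : IsOpen K) (hKb : Bornology.IsBounded K) (hKc : Convex ℝ K)
    (h0K : (0 : EuclideanSpace ℝ (Fin n)) ∈ K) :
    (⋃ x ∈ frontier K, subdiff (gaugeFn K) x) = frontier {y | suppFn K y < 1} :=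
  iUnion_subdiff_gauge_eq_frontier_dual_general K hKo hKb hKc h0K
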